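/- With five candidates A < B < C < D < E, single-peaked preferences, an odd number of voters, and Bloc voting with k = 2: if the winning set is {B,C} (each with strictly more approvals than A, D, E), then {B,C} is Gehrlein-stable, i.e., both B and C majority-defeat each of A, D, and E. -/

import Mathlib

/-!
Under Bloc voting with `k = 2` a voter approves exactly the candidates beaten by at most one
other. Single-peakedness puts all candidates beating `x` on one side of `x`, and none of them
beyond a candidate that `x` beats. Hence every voter preferring `A` to `B` or `C` approves `A`,
and every voter preferring `D` or `E` to `B` or `C` approves `D`. No voter approves both `A`
and `C`, or both `B` and `D`, so fewer than half of the voters approve `A` (resp. `D`), which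
has fewer approvals than `C` (resp. `B`); a fortiori fewer than half prefer a loser to a winner.
-/

open Finset

/-- Each voter's preference is a strict total (linear) order on the candidates. -/
def StrictPrefs {m N : ℕ} (P : Fin N → Fin m → Fin m → Prop) : Prop :=
  ∀ v : Fin N, IsStrictTotalOrder (Fin m) (P v)

/-- Single-peakedness w.r.t. the left-right order on `Fin m`: for `i < j < k`,
no voter ranks both `C_i` and `C_k` above `C_j`. -/
def SinglePeaked {m N : ℕ} (P : Fin N → Fin m → Fin m → Prop) : Prop :=
  ∀ (v : Fin N) (i j k : Fin m), i < j → j < k → ¬ (P v i j ∧ P v k j)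

/-- Number of voters preferring `a` to `b`. -/
def prefCount {m N : ℕ} (P : Fin N → Fin m → Fin m → Prop)
    [∀ v a b, Decidable (P v a b)] (a b : Fin m) : ℕ :=
  (univ.filter fun v => P v a b).card

/-- `a` majority-defeats `b`: strictly more than `N/2` voters prefer `a` to `b`. -/
def Defeats {m N : ℕ} (P : Fin N → Fin m → Fin m → Prop)
    [∀ v a b, Decidable (P v a b)] (a b : Fin m) : Prop :=
  2 * prefCount P a b > N

instance {m N : ℕ} (P : Fin N → Fin m → Fin m → Prop)
    [∀ v a b, Decidable (P v a b)] (a b : Fin m) : Decidable (Defeats P a b) :=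
  inferInstanceAs (Decidable (2 * prefCount P a b > N))

/-- Voter `v` approves candidate `a` under Bloc voting with `k` winners:
`a` is among `v`'s top `k` candidates. -/
def Approves {m N : ℕ} (P : Fin N → Fin m → Fin m → Prop)
    [∀ v a b, Decidable (P v a b)] (k : ℕ) (v : Fin N) (a : Fin m) : Prop :=
  (univ.filter fun b => P v b a).card < k

instance {m N : ℕ} (P : Fin N → Fin m → Fin m → Prop)
    [∀ v a b, Decidable (P v a b)] (k : ℕ) (v : Fin N) (a : Fin m) :
    Decidable (Approves P k v a) :=
  inferInstanceAs (Decidable ((univ.filter fun b => P v b a).card < k))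

/-- Bloc score of candidate `a`: the number of voters who approve `a`. -/
def blocScore {m N : ℕ} (P : Fin N → Fin m → Fin m → Prop)
    [∀ v a b, Decidable (P v a b)] (k : ℕ) (a : Fin m) : ℕ :=
  (univ.filter fun v => Approves P k v a).card

/-- `W` is a winning set under Bloc voting with `k` winners (strict vote totals):
`W` has `k` members and each member has strictly more approvals than each non-member. -/
def IsWinningSet {m N : ℕ} (P : Fin N → Fin m → Fin m → Prop)
    [∀ v a b, Decidable (P v a b)] (k : ℕ) (W : Finset (Fin m)) : Prop :=
  W.card = k ∧ ∀ w ∈ W, ∀ c ∉ W, blocScore P k w > blocScore P k c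

def IsSinglePeaked {α : Type*} [LT α] (r : α → α → Prop) : Prop :=
  ∀ i j k, i < j → j < k → ¬ (r i j ∧ r k j)

namespace IsSinglePeaked

variable {α : Type*} [LinearOrder α] {r : α → α → Prop} [IsStrictTotalOrder α r]

theorem lt_of_lt_of_rel_of_rel (h : IsSinglePeaked r) {b x w : α} (hxw : x < w) (hxw' : r x w)
    (hbx : r b x) : b < w := by
  have hbw : r b w := trans_of r hbx hxw'
  rcases lt_trichotomy b w with hlt | rfl | hgt
  · exact hlt
  · exact absurd hbw (irrefl_of r b)
  · exact absurd ⟨hxw', hbw⟩ (h x w b hxw hgt)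

theorem lt_of_gt_of_rel_of_rel (h : IsSinglePeaked r) {b x w : α} (hwx : w < x) (hxw' : r x w)
    (hbx : r b x) : w < b := by
  have hbw : r b w := trans_of r hbx hxw'
  rcases lt_trichotomy b w with hlt | rfl | hgt
  · exact absurd ⟨hbw, hxw'⟩ (h b w x hlt hwx)
  · exact absurd hbw (irrefl_of r b)
  · exact hgt

theorem rel_of_lt_of_lt_of_rel (h : IsSinglePeaked r) {w y x : α} (hwy : w < y) (hyx : y < x)
    (hxw : r x w) : r y w := by
  by_contra hyw
  have hwy' : r w y := by
    by_contra hwy'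
    exact hwy.ne (Std.Trichotomous.trichotomous w y hwy' hyw)
  exact h w y x hwy hyx ⟨hwy', trans_of r hxw hwy'⟩

end IsSinglePeaked

section Bloc

variable {m N : ℕ} (P : Fin N → Fin m → Fin m → Prop) [∀ v a b, Decidable (P v a b)]

theorem approves_two_iff (v : Fin N) (x : Fin m) :
    Approves P 2 v x ↔ ∀ b, P v b x → ∀ c, P v c x → b = c := by
  rw [Approves, Nat.lt_succ_iff, card_le_one]
  simp only [mem_filter, mem_univ, true_and]

theorem not_approves_two_of_lt_of_lt (hP : StrictPrefs P) (hSP : SinglePeaked P) (v : Fin N)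
    {y j z : Fin m} (hyj : y < j) (hjz : j < z) : ¬ (Approves P 2 v y ∧ Approves P 2 v z) := by
  have := hP v
  rintro ⟨hy, hz⟩
  rw [approves_two_iff] at hy hz
  -- `j` beats the worse of `y` and `z`, and so does the better one.
  have hj : P v j y ∨ P v j z := by
    by_contra! hj
    refine hSP v y j z hyj hjz ⟨?_, ?_⟩ <;> by_contra hj'
    · exact hyj.ne (Std.Trichotomous.trichotomous y j hj' hj.1)
    · exact hjz.ne' (Std.Trichotomous.trichotomous z j hj' hj.2)
  rcases trichotomous_of (P v) y z with hyz | rfl | hzy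
  · have hjz' : P v j z := hj.elim (fun hjy => trans_of (P v) hjy hyz) id
    exact hyj.ne (hz y hyz j hjz')
  · exact absurd (hyj.trans hjz) (lt_irrefl y)
  · have hjy : P v j y := hj.elim id (fun hjz' => trans_of (P v) hjz' hzy)
    exact hjz.ne' (hy z hzy j hjy)

theorem prefCount_add_prefCount (hP : StrictPrefs P) {a b : Fin m} (hab : a ≠ b) :
    prefCount P a b + prefCount P b a = N := by
  have hba : (univ.filter fun v => P v b a) = univ.filter fun v => ¬ P v a b := by
    ext v
    have := hP v
    simp only [mem_filter, mem_univ, true_and]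
    exact ⟨fun h h' => asymm_of (P v) h h',
      fun h => by_contra fun h' => hab (Std.Trichotomous.trichotomous a b h h')⟩
  rw [prefCount, prefCount, hba, card_filter_add_card_filter_not, card_univ, Fintype.card_fin]

variable {P}

theorem prefCount_le_blocScore {k : ℕ} {x w y : Fin m}
    (h : ∀ v, P v x w → Approves P k v y) : prefCount P x w ≤ blocScore P k y :=
  card_le_card (monotone_filter_right _ fun v _ => h v)

theorem blocScore_add_blocScore_le {k : ℕ} {y z : Fin m}
    (h : ∀ v, ¬ (Approves P k v y ∧ Approves P k v z)) :
    blocScore P k y + blocScore P k z ≤ N := by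
  have hz : blocScore P k z ≤ (univ.filter fun v => ¬ Approves P k v y).card :=
    card_le_card (monotone_filter_right _ fun v _ hz hy => h v ⟨hy, hz⟩)
  have hy := card_filter_add_card_filter_not (s := univ) (fun v => Approves P k v y)
  rw [card_univ, Fintype.card_fin] at hy
  rw [blocScore]
  omega

theorem defeats_of_approves (hP : StrictPrefs P) {k : ℕ} {w x y z : Fin m} (hwx : w ≠ x)
    (happ : ∀ v, P v x w → Approves P k v y) (hlt : blocScore P k y < blocScore P k z)
    (hdisj : ∀ v, ¬ (Approves P k v y ∧ Approves P k v z)) : Defeats P w x := by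
  have h₁ := prefCount_le_blocScore happ
  have h₂ := blocScore_add_blocScore_le hdisj
  have h₃ := prefCount_add_prefCount P hP hwx
  rw [Defeats]
  omega

end Bloc

section FiveCandidates

variable {N : ℕ} {P : Fin N → Fin 5 → Fin 5 → Prop} [∀ v a b, Decidable (P v a b)]

theorem approves_zero_of_rel (hP : StrictPrefs P) (hSP : SinglePeaked P) {v : Fin N}
    {w : Fin 5} (hw : w ≤ 2) (h : P v 0 w) : Approves P 2 v 0 := by
  have := hP v
  have hv : IsSinglePeaked (P v) := hSP v
  have hw₀ : 0 < w := Fin.pos_of_ne_zero fun hw₀ => irrefl_of (P v) 0 (hw₀ ▸ h)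
  rw [approves_two_iff]
  intro b hb c hc
  have hb₀ : b ≠ 0 := fun hb₀ => irrefl_of (P v) 0 (hb₀ ▸ hb)
  have hc₀ : c ≠ 0 := fun hc₀ => irrefl_of (P v) 0 (hc₀ ▸ hc)
  have hbw := hv.lt_of_lt_of_rel_of_rel hw₀ h hb
  have hcw := hv.lt_of_lt_of_rel_of_rel hw₀ h hc
  omega

theorem approves_three_of_rel (hP : StrictPrefs P) (hSP : SinglePeaked P) {v : Fin N}
    {w x : Fin 5} (hw : 1 ≤ w ∧ w ≤ 2) (hx : 3 ≤ x) (h : P v x w) : Approves P 2 v 3 := by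
  have := hP v
  have hv : IsSinglePeaked (P v) := hSP v
  have h₃ : P v 3 w := by
    rcases hx.eq_or_lt with rfl | hx
    · exact h
    · exact hv.rel_of_lt_of_lt_of_rel (by omega) hx h
  rw [approves_two_iff]
  intro b hb c hc
  have hb₃ : b ≠ 3 := fun hb₃ => irrefl_of (P v) 3 (hb₃ ▸ hb)
  have hc₃ : c ≠ 3 := fun hc₃ => irrefl_of (P v) 3 (hc₃ ▸ hc)
  have hwb := hv.lt_of_gt_of_rel_of_rel (by omega) h₃ hb
  have hwc := hv.lt_of_gt_of_rel_of_rel (by omega) h₃ hc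
  have hbc : ¬ (b < 3 ∧ 3 < c) := fun ⟨hb', hc'⟩ => hv b 3 c hb' hc' ⟨hb, hc⟩
  have hcb : ¬ (c < 3 ∧ 3 < b) := fun ⟨hc', hb'⟩ => hv c 3 b hc' hb' ⟨hc, hb⟩
  omega

end FiveCandidates

theorem five_candidates_BC_gehrlein_stable_general {N : ℕ}
    (P : Fin N → Fin 5 → Fin 5 → Prop) [∀ v a b, Decidable (P v a b)]
    (hP : StrictPrefs P) (hSP : SinglePeaked P)
    (hW : IsWinningSet P 2 ({1, 2} : Finset (Fin 5))) :
    ∀ w ∈ ({1, 2} : Finset (Fin 5)), ∀ c ∉ ({1, 2} : Finset (Fin 5)),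
      Defeats P w c := by
  intro w hw c hc
  simp only [mem_insert, mem_singleton] at hw hc
  have hw' : 1 ≤ w ∧ w ≤ 2 := by omega
  have hwc : w ≠ c := by omega
  rcases (by omega : c = 0 ∨ 3 ≤ c) with rfl | hc₃
  · exact defeats_of_approves hP hwc (fun v => approves_zero_of_rel hP hSP hw'.2)
      (hW.2 2 (by decide) 0 (by decide))
      (fun v => not_approves_two_of_lt_of_lt P hP hSP v (j := 1) (by decide) (by decide))
  · exact defeats_of_approves hP hwc (fun v => approves_three_of_rel hP hSP hw' hc₃)
      (hW.2 1 (by decide) 3 (by decide))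
      (fun v h => not_approves_two_of_lt_of_lt P hP hSP v (j := 2) (by decide) (by decide) h.symm)

/-- With five candidates `A < B < C < D < E` and Bloc voting with
`k = 2`, if the winning set is `{B, C}` then it is Gehrlein-stable. -/
theorem five_candidates_BC_gehrlein_stable {N : ℕ}
    (P : Fin N → Fin 5 → Fin 5 → Prop) [∀ v a b, Decidable (P v a b)]
    (hP : StrictPrefs P) (hSP : SinglePeaked P) (hN : Odd N)
    (hW : IsWinningSet P 2 ({1, 2} : Finset (Fin 5))) :
    ∀ w ∈ ({1, 2} : Finset (Fin 5)), ∀ c ∉ ({1, 2} : Finset (Fin 5)),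
      Defeats P w c :=
  five_candidates_BC_gehrlein_stable_general P hP hSP hW
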